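/- arXiv:math/0601317 — 3 statements merged into one kernel-verified Lean document; each statement's English description precedes it below -/
import Mathlib

section
/- Let (W,S) be a finite Coxeter system and σ an automorphism of W with σ(S)=S. Then the radical of the fixed-point algebra Σ(W)^σ equals the σ-fixed points of the radical of Σ(W): Rad(Σ(W)^σ) = (Rad Σ(W))^σ. -/
open MonoidAlgebra

variable {B W : Type*} [DecidableEq B] [Fintype B] [Group W] [Fintype W] [DecidableEq W]

/-- `x_I`: the sum, in the group algebra `ℚW`, of the minimal length coset
representatives of the standard parabolic subgroup `W_I` in `W`, i.e. the sum of the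
`w ∈ W` such that `ws > w` for all `s ∈ I`. -/
noncomputable def descentBasis {M : CoxeterMatrix B} (cs : CoxeterSystem M W)
    (I : Finset B) : MonoidAlgebra ℚ W :=
  ∑ w : W, if ∀ i ∈ I, cs.length w < cs.length (w * cs.simple i)
    then MonoidAlgebra.single w (1 : ℚ) else 0

/-- `A` is the Solomon descent algebra `Σ(W)` of `(W,S)`: a subalgebra of the group
algebra `ℚW` whose underlying set is the span of the elements `x_I`, `I ⊆ S`.
(By Solomon's theorem this span is indeed closed under multiplication.) -/
def IsDescentAlgebra {M : CoxeterMatrix B} (cs : CoxeterSystem M W)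
    (A : Subalgebra ℚ (MonoidAlgebra ℚ W)) : Prop :=
  (A : Set (MonoidAlgebra ℚ W)) = Submodule.span ℚ (Set.range (descentBasis cs))

/-!
In a finite-dimensional algebra over a field, `x` lies in the Jacobson radical of a subalgebra `C`
iff `y x` is nilpotent for every `y ∈ C`; in characteristic zero an element is nilpotent iff left
multiplication by each of its positive powers has trace zero (`tr` below).

Since `σ(S) = S`, `σ` preserves lengths and permutes the `x_I`, so it stabilises `Σ(W)` and has
finite order. If `x ∈ Rad(Σ(W)^σ)` and `w ∈ Σ(W)`, then `tr(w x) = tr(u x) / n` where `u` is the sum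
of the `n` translates of `w` under the powers of `σ`; as `u ∈ Σ(W)^σ`, `u x` is nilpotent and
`tr(w x) = 0`. Applied to `w = (y x)^k y` this gives `tr((y x)^(k+1)) = 0` for all `k`, so `y x` is
nilpotent for every `y ∈ Σ(W)`, i.e. `x ∈ Rad Σ(W)`. The other inclusion is immediate.
-/

open LinearMap Module Module.End

theorem Finset.mul_eq_zero_of_forall_sum_mul_pow_succ_eq_zero {R : Type*} [CommRing R]
    [IsDomain R] (s : Finset R) (c : R → R) (h : ∀ k : ℕ, ∑ μ ∈ s, c μ * μ ^ (k + 1) = 0) :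
    ∀ μ ∈ s, c μ * μ = 0 := by
  let f : Fin s.card → R := fun j ↦ s.equivFin.symm j
  have hf : Function.Injective f := Subtype.val_injective.comp s.equivFin.symm.injective
  have hv : (fun j ↦ c (f j) * f j) = 0 := by
    refine Matrix.eq_zero_of_forall_pow_sum_mul_pow_eq_zero hf fun i ↦ ?_
    rw [← h i, ← s.sum_coe_sort, ← s.equivFin.symm.sum_comp]
    simp only [f, mul_assoc, ← pow_succ']
  intro μ hμ
  simpa [f] using congrFun hv (s.equivFin ⟨μ, hμ⟩)

section MaxGenEigenspace

variable {K V : Type*} [Field K] [AddCommGroup V] [Module K V] [FiniteDimensional K V]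

theorem Module.End.trace_pow_restrict_maxGenEigenspace (g : End K V) (μ : K) (k : ℕ)
    (h : Set.MapsTo (g ^ k) (g.maxGenEigenspace μ) (g.maxGenEigenspace μ)) :
    trace K (g.maxGenEigenspace μ) ((g ^ k).restrict h) =
      μ ^ k * finrank K (g.maxGenEigenspace μ) := by
  induction k with
  | zero =>
    have hid : (g ^ 0).restrict h = LinearMap.id := by ext; simp
    rw [hid, trace_id, pow_zero, one_mul]
  | succ k ih =>
    have hk := g.mapsTo_maxGenEigenspace_of_comm ((Commute.refl g).pow_right k) μ
    have hg := g.mapsTo_maxGenEigenspace_of_comm (Commute.refl g) μ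
    have hsplit : (g ^ (k + 1)).restrict h = (g ^ k).restrict hk ∘ₗ g.restrict hg := by
      ext; simp [pow_succ, Module.End.mul_apply]; rfl
    have hnil : IsNilpotent (g.restrict hg - algebraMap K _ μ) := by
      have hsub := g.mapsTo_maxGenEigenspace_of_comm (Algebra.mul_sub_algebraMap_commutes g μ) μ
      convert g.isNilpotent_restrict_maxGenEigenspace_sub_algebraMap μ hsub
      ext; simp [Module.algebraMap_end_apply]; rfl
    rw [hsplit, trace_comp_eq_mul_of_commute_of_isNilpotent μ
      (LinearMap.restrict_commute ((Commute.refl g).pow_left k) _ _) hnil, ih hk]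
    ring

variable [CharZero K]

theorem Module.End.isNilpotent_of_forall_trace_pow_succ_eq_zero_of_isAlgClosed [IsAlgClosed K]
    (g : End K V) (h : ∀ k : ℕ, trace K V (g ^ (k + 1)) = 0) : IsNilpotent g := by
  classical
  have hind := g.independent_maxGenEigenspace
  have hds := DirectSum.isInternal_submodule_of_iSupIndep_of_iSup_eq_top hind
    g.iSup_maxGenEigenspace_eq_top
  have hfin : {μ | g.maxGenEigenspace μ ≠ ⊥}.Finite :=
    WellFoundedGT.finite_ne_bot_of_iSupIndep hind
  have hsum (k : ℕ) :
      ∑ μ ∈ hfin.toFinset, (finrank K (g.maxGenEigenspace μ) : K) * μ ^ (k + 1) = 0 := by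
    rw [← h k, trace_eq_sum_trace_restrict' hds hfin
      fun μ ↦ g.mapsTo_maxGenEigenspace_of_comm ((Commute.refl g).pow_right _) μ]
    refine Finset.sum_congr rfl fun μ _ ↦ ?_
    rw [trace_pow_restrict_maxGenEigenspace, mul_comm]
  have hzero (μ : K) (hμ : μ ≠ 0) : g.maxGenEigenspace μ = ⊥ := by
    by_contra hne
    have := hfin.toFinset.mul_eq_zero_of_forall_sum_mul_pow_succ_eq_zero _ hsum μ
      (hfin.mem_toFinset.mpr hne)
    rw [mul_eq_zero, Nat.cast_eq_zero, Submodule.finrank_eq_zero] at this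
    exact this.elim hne hμ
  have htop : g.maxGenEigenspace 0 = ⊤ := by
    rw [eq_top_iff, ← g.iSup_maxGenEigenspace_eq_top, iSup_le_iff]
    intro μ
    rcases eq_or_ne μ 0 with rfl | hμ
    · exact le_rfl
    · exact (hzero μ hμ).trans_le bot_le
  refine ((charpoly_nilpotent_tfae g).out 0 2).mpr fun m ↦ ?_
  obtain ⟨k, hk⟩ := (mem_maxGenEigenspace g 0 m).mp (htop ▸ Submodule.mem_top)
  exact ⟨k, by simpa using hk⟩

theorem Module.End.isNilpotent_of_forall_trace_pow_succ_eq_zero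
    (g : End K V) (h : ∀ k : ℕ, trace K V (g ^ (k + 1)) = 0) : IsNilpotent g := by
  let L := AlgebraicClosure K
  rw [← IsNilpotent.map_iff (f := End.baseChangeHom K L V)
    (LinearMap.baseChangeHom_injective K V L)]
  refine isNilpotent_of_forall_trace_pow_succ_eq_zero_of_isAlgClosed _ fun k ↦ ?_
  rw [← map_pow]
  change trace L _ ((g ^ (k + 1)).baseChange L) = 0
  rw [trace_baseChange, h k, map_zero]

end MaxGenEigenspace

section TraceForm

variable {K A : Type*} [Field K] [Ring A] [Algebra K A]

theorem trace_lmul_eq_zero_of_isNilpotent {z : A} (hz : IsNilpotent z) :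
    trace K A (Algebra.lmul K A z) = 0 :=
  (isNilpotent_trace_of_isNilpotent (hz.map (Algebra.lmul K A))).eq_zero

theorem trace_lmul_map (ψ : A ≃ₐ[K] A) (z : A) :
    trace K A (Algebra.lmul K A (ψ z)) = trace K A (Algebra.lmul K A z) := by
  have hconj : Algebra.lmul K A (ψ z) = ψ.toLinearEquiv.conj (Algebra.lmul K A z) := by
    ext a
    simp [LinearEquiv.conj_apply]
  rw [hconj, trace_conj']

theorem isNilpotent_of_forall_trace_lmul_pow_succ_eq_zero [CharZero K] [FiniteDimensional K A]
    {z : A} (h : ∀ k : ℕ, trace K A (Algebra.lmul K A (z ^ (k + 1))) = 0) : IsNilpotent z := by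
  rw [← IsNilpotent.map_iff (Algebra.lmul_injective (R := K) (A := A))]
  exact Module.End.isNilpotent_of_forall_trace_pow_succ_eq_zero _ fun k ↦ by rw [← map_pow, h]

theorem AlgEquiv.apply_sum_range_pow_apply (ψ : A ≃ₐ[K] A) {n : ℕ} (hn : ψ ^ n = 1) (w : A) :
    ψ (∑ k ∈ Finset.range n, (ψ ^ k) w) = ∑ k ∈ Finset.range n, (ψ ^ k) w := by
  have hshift := (Finset.sum_range_succ' (fun k ↦ (ψ ^ k) w) n).symm.trans
    (Finset.sum_range_succ (fun k ↦ (ψ ^ k) w) n)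
  rw [hn, pow_zero] at hshift
  rw [map_sum]
  simp only [← AlgEquiv.mul_apply, ← pow_succ']
  exact add_right_cancel hshift

theorem isNilpotent_mul_of_forall_fixed_isNilpotent_mul [CharZero K] [FiniteDimensional K A]
    (ψ : A ≃ₐ[K] A) (hψ : IsOfFinOrder ψ) (S : Subalgebra K A) (hS : Set.MapsTo ψ S S) {x : A}
    (hxS : x ∈ S) (hx : ψ x = x) (hnil : ∀ y ∈ S, ψ y = y → IsNilpotent (y * x)) {y : A}
    (hy : y ∈ S) : IsNilpotent (y * x) := by
  obtain ⟨n, hn, hψn⟩ := hψ.exists_pow_eq_one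
  have htrace (w : A) (hw : w ∈ S) : trace K A (Algebra.lmul K A (w * x)) = 0 := by
    set u := ∑ k ∈ Finset.range n, (ψ ^ k) w
    have huS : u ∈ S := S.sum_mem fun k _ ↦ by
      rw [AlgEquiv.coe_pow]
      exact hS.iterate k hw
    have hmul (k : ℕ) : (ψ ^ k) w * x = (ψ ^ k) (w * x) := by
      rw [map_mul, AlgEquiv.coe_pow, Function.iterate_fixed hx]
    have hu :
        trace K A (Algebra.lmul K A (u * x)) = n • trace K A (Algebra.lmul K A (w * x)) := by
      simp only [u, Finset.sum_mul, map_sum, hmul, trace_lmul_map, Finset.sum_const,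
        Finset.card_range]
    rw [trace_lmul_eq_zero_of_isNilpotent (hnil u huS (ψ.apply_sum_range_pow_apply hψn w)),
      nsmul_eq_mul, eq_comm, mul_eq_zero, Nat.cast_eq_zero] at hu
    exact hu.resolve_left hn.ne'
  refine isNilpotent_of_forall_trace_lmul_pow_succ_eq_zero (K := K) fun k ↦ ?_
  rw [pow_succ, ← mul_assoc]
  exact htrace _ (S.mul_mem (S.pow_mem (S.mul_mem hy hxS) k) hy)

end TraceForm

theorem IsArtinianRing.mem_jacobson_bot_iff_forall_isNilpotent_mul {R : Type*} [Ring R]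
    [IsArtinianRing R] {x : R} :
    x ∈ (⊥ : Ideal R).jacobson ↔ ∀ y, IsNilpotent (y * x) := by
  refine ⟨fun hx y ↦ ?_, fun h ↦ Ideal.mem_jacobson_iff.mpr fun y ↦ ?_⟩
  · obtain ⟨n, hn⟩ := IsArtinianRing.isNilpotent_jacobson_bot (R := R)
    have := Ideal.pow_mem_pow (Ideal.mul_mem_left _ y hx) n
    rw [hn, Ideal.zero_eq_bot, Ideal.mem_bot] at this
    exact ⟨n, this⟩
  · obtain ⟨u, hu⟩ := (h y).isUnit_add_one
    refine ⟨↑u⁻¹, ?_⟩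
    rw [mul_assoc, ← mul_add_one, ← hu, Units.inv_mul, sub_self]
    exact Submodule.zero_mem _

theorem Subalgebra.exists_coe_eq_mem_jacobson_bot_iff {K A : Type*} [Field K] [Ring A]
    [Algebra K A] [FiniteDimensional K A] (S : Subalgebra K A) (x : A) :
    (∃ a : S, ↑a = x ∧ a ∈ (⊥ : Ideal S).jacobson) ↔ x ∈ S ∧ ∀ y ∈ S, IsNilpotent (y * x) := by
  have : IsArtinianRing S := isArtinian_of_tower K inferInstance
  simp only [IsArtinianRing.mem_jacobson_bot_iff_forall_isNilpotent_mul,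
    ← IsNilpotent.map_iff (f := S.val) Subtype.val_injective, map_mul, Subtype.forall]
  constructor
  · rintro ⟨a, rfl, ha⟩
    exact ⟨a.2, ha⟩
  · rintro ⟨hx, h⟩
    exact ⟨⟨x, hx⟩, rfl, h⟩

theorem Subalgebra.coe_jacobson_bot_fixedPoints {K A : Type*} [Field K] [CharZero K] [Ring A]
    [Algebra K A] [FiniteDimensional K A] (ψ : A ≃ₐ[K] A) (hψ : IsOfFinOrder ψ)
    (S S' : Subalgebra K A) (hS : Set.MapsTo ψ S S)
    (hS' : (S' : Set A) = {a | a ∈ S ∧ ψ a = a}) :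
    {x : A | ∃ a : S', ↑a = x ∧ a ∈ (⊥ : Ideal S').jacobson} =
      {x : A | ∃ a : S, ↑a = x ∧ a ∈ (⊥ : Ideal S).jacobson} ∩ {x | ψ x = x} := by
  have hmem (y : A) : y ∈ S' ↔ y ∈ S ∧ ψ y = y := Set.ext_iff.mp hS' y
  ext x
  simp only [Set.mem_ofPred_eq, Set.mem_inter_iff, exists_coe_eq_mem_jacobson_bot_iff, hmem]
  constructor
  · rintro ⟨⟨hxS, hx⟩, hnil⟩
    exact ⟨⟨hxS, fun y ↦ isNilpotent_mul_of_forall_fixed_isNilpotent_mul ψ hψ S hS hxS hx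
      fun y hyS hyψ ↦ hnil y ⟨hyS, hyψ⟩⟩, hx⟩
  · rintro ⟨⟨hxS, hnil⟩, hx⟩
    exact ⟨⟨hxS, hx⟩, fun y hy ↦ hnil y hy.1⟩

section Coxeter

variable {ι G : Type*} [Group G] {M : CoxeterMatrix ι} (cs : CoxeterSystem M G)

theorem CoxeterSystem.length_map_le (σ : G →* G)
    (hσ : Set.MapsTo σ (Set.range cs.simple) (Set.range cs.simple)) (w : G) :
    cs.length (σ w) ≤ cs.length w := by
  choose π hπ using fun i ↦ hσ (Set.mem_range_self i)
  obtain ⟨l, hl, rfl⟩ := cs.exists_isReduced w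
  have hword : σ (cs.wordProd l) = cs.wordProd (l.map π) := by
    simp only [wordProd, map_list_prod, List.map_map]
    congr 1
    exact List.map_congr_left fun i _ ↦ (hπ i).symm
  rw [hword, hl.eq]
  exact (cs.length_wordProd_le _).trans_eq (List.length_map _)

theorem CoxeterSystem.length_map (σ : G ≃* G)
    (hσ : σ '' Set.range cs.simple = Set.range cs.simple) (w : G) :
    cs.length (σ w) = cs.length w := by
  have hσsymm : Set.MapsTo σ.symm (Set.range cs.simple) (Set.range cs.simple) := by
    intro s hs
    rw [← hσ] at hs
    obtain ⟨t, ht, rfl⟩ := hs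
    simpa using ht
  refine le_antisymm (cs.length_map_le σ (Set.mapsTo_iff_image_subset.mpr hσ.subset) w) ?_
  simpa using cs.length_map_le σ.symm.toMonoidHom hσsymm (σ w)

theorem domCongr_descentBasis [DecidableEq ι] [Fintype ι] [Fintype G] (σ : G ≃* G)
    (hlen : ∀ w, cs.length (σ w) = cs.length w) (π : ι → ι)
    (hπ : ∀ i, σ (cs.simple i) = cs.simple (π i)) (I : Finset ι) :
    domCongr ℚ ℚ σ (descentBasis cs I) = descentBasis cs (I.image π) := by
  rw [descentBasis, map_sum, descentBasis]
  conv_rhs => rw [← σ.toEquiv.sum_comp]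
  refine Finset.sum_congr rfl fun w _ ↦ ?_
  have hdesc : (∀ i ∈ I.image π, cs.length (σ w) < cs.length (σ w * cs.simple i)) ↔
      ∀ i ∈ I, cs.length w < cs.length (w * cs.simple i) := by
    simp only [Finset.forall_mem_image, ← hπ, ← map_mul, hlen]
  simp only [MulEquiv.toEquiv_eq_coe, EquivLike.coe_coe, hdesc]
  split_ifs <;> simp

theorem mapsTo_domCongr_span_descentBasis [DecidableEq ι] [Fintype ι] [Fintype G]
    (σ : G ≃* G) (hσ : σ '' Set.range cs.simple = Set.range cs.simple) :
    Set.MapsTo (domCongr ℚ ℚ σ) (Submodule.span ℚ (Set.range (descentBasis cs)))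
      (Submodule.span ℚ (Set.range (descentBasis cs))) := by
  choose π hπ using fun i ↦ hσ.subset (Set.mem_image_of_mem σ (Set.mem_range_self i))
  intro x hx
  refine Submodule.span_mono ?_
    (Submodule.apply_mem_span_image_of_mem_span (domCongr ℚ ℚ σ).toLinearMap hx)
  rintro _ ⟨_, ⟨I, rfl⟩, rfl⟩
  exact ⟨I.image π,
    (domCongr_descentBasis cs σ (cs.length_map σ hσ) π (fun i ↦ (hπ i).symm) I).symm⟩

end Coxeter

/-- For a length-preserving automorphism `σ` of `W` (i.e. `σ(S) = S`), the Jacobson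
radical of the fixed-point algebra `Σ(W)^σ` equals the set of `σ`-fixed points of the
Jacobson radical of `Σ(W)`. -/
theorem radical_fixedPoints_descentAlgebra {M : CoxeterMatrix B}
    (cs : CoxeterSystem M W) (σ : W ≃* W)
    (hσ : σ '' Set.range cs.simple = Set.range cs.simple)
    (A A' : Subalgebra ℚ (MonoidAlgebra ℚ W)) (hA : IsDescentAlgebra cs A)
    (hA' : (A' : Set (MonoidAlgebra ℚ W)) =
      {a | a ∈ A ∧ MonoidAlgebra.domCongr ℚ ℚ σ a = a}) :
    {x : MonoidAlgebra ℚ W | ∃ a : A', ↑a = x ∧ a ∈ (⊥ : Ideal A').jacobson} =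
      {x : MonoidAlgebra ℚ W | ∃ a : A, ↑a = x ∧ a ∈ (⊥ : Ideal A).jacobson} ∩
        {x | MonoidAlgebra.domCongr ℚ ℚ σ x = x} := by
  have hstable : Set.MapsTo (domCongr ℚ ℚ σ) A A := by
    rw [show (A : Set (MonoidAlgebra ℚ W)) = _ from hA]
    exact mapsTo_domCongr_span_descentBasis cs σ hσ
  exact Subalgebra.coe_jacobson_bot_fixedPoints (domCongr ℚ ℚ σ)
    ((domCongrAut (R := ℚ) (A := ℚ)).isOfFinOrder (isOfFinOrder_of_finite σ)) A A' hstable hA'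
end

section
/- In the descent algebra of a finite Coxeter system (W,S), for every I ⊆ S one has w₀ · x′_I = (−1)^{|I|} x′_I, where x′_I = Σ_{K⊆I} (−1/2)^{|I|−|K|} x_K and w₀ is the longest element (viewed as the element y_∅ ∈ Σ(W)). -/
open MonoidAlgebra

variable {B W : Type*} [DecidableEq B] [Fintype B] [Group W] [Fintype W] [DecidableEq W]

/-- `x′_I = Σ_{K ⊆ I} (−1/2)^{|I|−|K|} x_K`. -/
noncomputable def descentBasis' {M : CoxeterMatrix B} (cs : CoxeterSystem M W)
    (I : Finset B) : MonoidAlgebra ℚ W :=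
  ∑ K ∈ I.powerset, ((-(2:ℚ)⁻¹) ^ (I.card - K.card)) • descentBasis cs K

/-!
Expanding the sum over `K ⊆ I` as a product shows that the coefficient of `w` in `x′_I`
is `∏_{i ∈ I} ±1/2`, with sign `-` exactly when `s_i` is a right descent of `w`. Left
multiplication by `w₀` permutes `W` and exchanges the right descents of `u` with the right
ascents of `w₀ u`, so every factor changes sign.

That exchange comes from the sign representation of `W` on `W × {±1}`, in which `s` acts by
`(t, ε) ↦ (s t s, ±ε)` with a sign change iff `t = s`. Its second component is a cocycle
`η(w, t)` that equals `-1` exactly when the reflection `t` is a right inversion of `w`. Every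
reflection is a right inversion of the longest element, so
`η(w₀ u, s) = η(u, s) η(w₀, u s u⁻¹) = -η(u, s)`.
-/

namespace CoxeterSystem

variable {B W : Type*} [Group W] {M : CoxeterMatrix B} (cs : CoxeterSystem M W)

local prefix:100 "s" => cs.simple
local prefix:100 "π" => cs.wordProd
local prefix:100 "ℓ" => cs.length

theorem simple_mul_mul_simple_eq_iff {i : B} {t u : W} :
    s i * t * s i = u ↔ t = s i * u * s i := by
  constructor <;> rintro rfl <;> simp [mul_assoc]

section SignRepresentation

variable [DecidableEq W]

noncomputable def simpleSignPerm (i : B) : Equiv.Perm (W × ℤˣ) :=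
  Function.Involutive.toPerm (fun x => (s i * x.1 * s i, if x.1 = s i then -x.2 else x.2)) <| by
    rintro ⟨t, ε⟩
    by_cases h : t = s i
    · simp [h]
    · simp [h, mul_assoc, mul_eq_one_iff_eq_inv]

theorem simpleSignPerm_apply (i : B) (t : W) (ε : ℤˣ) :
    cs.simpleSignPerm i (t, ε) = (s i * t * s i, if t = s i then -ε else ε) :=
  rfl

theorem simpleSignPerm_mul_pow_apply (i j : B) (k : ℕ) (t : W) (ε : ℤˣ) :
    ((cs.simpleSignPerm i * cs.simpleSignPerm j) ^ k) (t, ε) =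
      ((s i * s j) ^ k * t * (s j * s i) ^ k,
        ε * ∏ a ∈ Finset.range (2 * k), if t = (s j * s i) ^ a * s j then -1 else 1) := by
  induction k with
  | zero => simp
  | succ k ih =>
    set p := s i * s j
    set r := s j * s i
    have hsemiconj : s j * p ^ k = r ^ k * s j :=
      (SemiconjBy.pow_right (by simp [p, r, SemiconjBy, mul_assoc]) k).eq
    have hconj : ∀ x y : W, p ^ k * x * r ^ k = y ↔ x = r ^ k * y * p ^ k := by
      have hinv : (p ^ k)⁻¹ = r ^ k := by simp [p, r, ← inv_pow]
      intro x y
      rw [← hinv]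
      constructor <;> rintro rfl <;> group
    have hflip_j : p ^ k * t * r ^ k = s j ↔ t = r ^ (2 * k) * s j := by
      rw [hconj, mul_assoc, hsemiconj, two_mul, pow_add, mul_assoc]
    have hflip_i : s j * (p ^ k * t * r ^ k) * s j = s i ↔ t = r ^ (2 * k + 1) * s j := by
      rw [simple_mul_mul_simple_eq_iff, hconj, show s j * s i * s j = r * s j from rfl, mul_assoc,
        mul_assoc, hsemiconj, ← mul_assoc, ← mul_assoc, ← pow_succ, ← pow_add,
        show k + 1 + k = 2 * k + 1 by ring]
    rw [pow_succ', Equiv.Perm.mul_apply, ih, Equiv.Perm.mul_apply, simpleSignPerm_apply,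
      simpleSignPerm_apply]
    simp only [hflip_j, hflip_i, Prod.mk.injEq]
    refine ⟨by rw [pow_succ' p, pow_succ r]; simp only [p, r, mul_assoc], ?_⟩
    rw [show 2 * (k + 1) = 2 * k + 1 + 1 by ring, Finset.prod_range_succ, Finset.prod_range_succ]
    split_ifs <;> simp

theorem isLiftable_simpleSignPerm : M.IsLiftable cs.simpleSignPerm := by
  intro i j
  ext1 ⟨t, ε⟩
  rw [simpleSignPerm_mul_pow_apply, simple_mul_simple_pow, simple_mul_simple_pow', one_mul, mul_one,
    Equiv.Perm.one_apply, Prod.mk.injEq, two_mul, Finset.prod_range_add]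
  -- `(s j * s i) ^ M i j = 1`, so the signs collected in the second half repeat the first half
  simp only [pow_add, simple_mul_simple_pow', one_mul, ← sq, Int.units_sq, mul_one, true_and]

noncomputable def signPerm : W →* Equiv.Perm (W × ℤˣ) :=
  cs.lift ⟨cs.simpleSignPerm, cs.isLiftable_simpleSignPerm⟩

theorem signPerm_simple (i : B) : cs.signPerm (s i) = cs.simpleSignPerm i :=
  cs.lift_apply_simple cs.isLiftable_simpleSignPerm i

noncomputable def inversionSign (w t : W) : ℤˣ :=
  (cs.signPerm w (t, 1)).2

theorem signPerm_apply (w t : W) (ε : ℤˣ) :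
    cs.signPerm w (t, ε) = (w * t * w⁻¹, ε * cs.inversionSign w t) := by
  induction w using cs.simple_induction_left generalizing t ε with
  | one => simp [inversionSign]
  | mul_simple_left w i ih =>
    rw [inversionSign, map_mul, Equiv.Perm.mul_apply, Equiv.Perm.mul_apply, ih, ih t 1,
      signPerm_simple, simpleSignPerm_apply, simpleSignPerm_apply]
    refine Prod.ext (by simp only [mul_inv_rev, inv_simple, mul_assoc]) ?_
    by_cases h : w * t * w⁻¹ = s i <;> simp [h]

theorem inversionSign_mul (u v t : W) :
    cs.inversionSign (u * v) t = cs.inversionSign v t * cs.inversionSign u (v * t * v⁻¹) := by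
  rw [inversionSign, map_mul, Equiv.Perm.mul_apply, signPerm_apply cs v t 1, one_mul,
    signPerm_apply]

theorem inversionSign_simple (i : B) (t : W) :
    cs.inversionSign (s i) t = if t = s i then -1 else 1 := by
  simp [inversionSign, signPerm_simple, simpleSignPerm_apply]

theorem inversionSign_wordProd (ω : List B) (t : W) :
    cs.inversionSign (π ω) t = (-1) ^ (cs.rightInvSeq ω).count t := by
  induction ω with
  | nil => simp [inversionSign]
  | cons i ω ih =>
    have hconj : π ω * t * (π ω)⁻¹ = s i ↔ (π ω)⁻¹ * s i * π ω = t := by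
      constructor <;> intro h <;> rw [← h] <;> group
    rw [wordProd_cons, inversionSign_mul, ih, inversionSign_simple, rightInvSeq, List.count_cons]
    simp only [hconj, beq_iff_eq]
    split_ifs <;> simp [pow_succ]

theorem inversionSign_self {t : W} (ht : cs.IsReflection t) : cs.inversionSign t t = -1 := by
  obtain ⟨v, i, rfl⟩ := ht
  have hconj : v⁻¹ * (v * s i * v⁻¹) * v = s i := by group
  have hinv := cs.inversionSign_mul v v⁻¹ (v * s i * v⁻¹)
  rw [mul_inv_cancel, inv_inv, hconj] at hinv
  rw [inversionSign_mul, inv_inv, hconj, inversionSign_mul, inversionSign_simple, if_pos rfl,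
    mul_inv_cancel_right, mul_left_comm, ← hinv]
  simp [inversionSign]

theorem length_mul_lt_of_inversionSign_eq_neg_one {w t : W} (h : cs.inversionSign w t = -1) :
    ℓ (w * t) < ℓ w := by
  obtain ⟨ω, hω, rfl⟩ := cs.exists_isReduced w
  rw [inversionSign_wordProd] at h
  have hmem : t ∈ cs.rightInvSeq ω := by
    by_contra hmem
    rw [List.count_eq_zero_of_not_mem hmem, pow_zero] at h
    exact absurd h (by decide)
  exact (cs.isRightInversion_of_mem_rightInvSeq hω hmem).2

theorem inversionSign_eq_neg_one_iff {w t : W} (ht : cs.IsReflection t) :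
    cs.inversionSign w t = -1 ↔ ℓ (w * t) < ℓ w := by
  refine ⟨cs.length_mul_lt_of_inversionSign_eq_neg_one, fun hlt => ?_⟩
  by_contra hne
  -- otherwise `t` would also be a right inversion of `w * t`
  have h : cs.inversionSign (w * t) t = -1 := by
    rw [inversionSign_mul, mul_inv_cancel_right, cs.inversionSign_self ht,
      (Int.units_eq_one_or _).resolve_right hne, mul_one]
  have := cs.length_mul_lt_of_inversionSign_eq_neg_one h
  rw [mul_assoc, ht.mul_self, mul_one] at this
  omega

end SignRepresentation

theorem isRightDescent_longest_mul_iff {w₀ : W} (hw₀ : ∀ w : W, ℓ w ≤ ℓ w₀)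
    (u : W) (i : B) :
    cs.IsRightDescent (w₀ * u) i ↔ ¬cs.IsRightDescent u i := by
  classical
  have hsimple : ∀ w : W, cs.IsRightDescent w i ↔ cs.inversionSign w (s i) = -1 := fun w =>
    (cs.inversionSign_eq_neg_one_iff (cs.isReflection_simple i)).symm
  have hlongest : cs.inversionSign w₀ (u * s i * u⁻¹) = -1 :=
    (cs.inversionSign_eq_neg_one_iff ((cs.isReflection_simple i).conj u)).2 <|
      (hw₀ _).lt_of_ne (((cs.isReflection_simple i).conj u).length_mul_left_ne w₀)
  rw [hsimple, hsimple, inversionSign_mul, hlongest, mul_neg_one, neg_inj, ← Ne,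
    Int.units_ne_iff_eq_neg, neg_neg]

noncomputable instance (w : W) : DecidablePred (cs.IsRightDescent w) := fun i =>
  inferInstanceAs (Decidable (ℓ (w * s i) < ℓ w))

noncomputable def descentCoeff (I : Finset B) (w : W) : ℚ :=
  ∏ i ∈ I, if cs.IsRightDescent w i then -2⁻¹ else 2⁻¹

theorem descentCoeff_longest_mul {w₀ : W} (hw₀ : ∀ w : W, ℓ w ≤ ℓ w₀)
    (I : Finset B) (u : W) :
    cs.descentCoeff I (w₀ * u) = (-1) ^ I.card * cs.descentCoeff I u := by
  rw [descentCoeff, descentCoeff, ← Finset.prod_neg]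
  refine Finset.prod_congr rfl fun i _ => ?_
  simp only [cs.isRightDescent_longest_mul_iff hw₀]
  split_ifs <;> norm_num

theorem descentBasis'_eq_sum [DecidableEq B] [Fintype B] [Fintype W] (I : Finset B) :
    descentBasis' cs I = ∑ w : W, cs.descentCoeff I w • single w (1 : ℚ) := by
  have hcoeff : ∀ w : W, ∑ K ∈ I.powerset, (-(2:ℚ)⁻¹) ^ (I.card - K.card) *
      (if ∀ i ∈ K, ℓ w < ℓ (w * s i) then 1 else 0) =
      cs.descentCoeff I w := by
    intro w
    have hfactor : ∀ i : B, (if ℓ w < ℓ (w * s i) then (1 : ℚ) else 0) +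
        -2⁻¹ = if cs.IsRightDescent w i then -2⁻¹ else 2⁻¹ := by
      intro i
      by_cases h : cs.IsRightDescent w i
      · simp [h, h.not_gt]
      · have : ℓ w < ℓ (w * s i) := by
          rw [cs.not_isRightDescent_iff.1 h]
          exact Nat.lt_succ_self _
        norm_num [h, this]
    rw [descentCoeff, ← Finset.prod_congr rfl fun i _ => hfactor i, Finset.prod_add]
    refine Finset.sum_congr rfl fun K hK => ?_
    rw [Finset.prod_boole, Finset.prod_const,
      Finset.card_sdiff_of_subset (Finset.mem_powerset.1 hK), mul_comm]
    congr!
  unfold descentBasis' descentBasis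
  simp only [Finset.smul_sum]
  rw [Finset.sum_comm]
  refine Finset.sum_congr rfl fun w _ => ?_
  simp only [← hcoeff, Finset.sum_smul, mul_smul, ite_smul, one_smul, zero_smul]

end CoxeterSystem

/-- In the descent algebra, `w₀ · x′_I = (−1)^{|I|} x′_I` for every `I ⊆ S`, where
`w₀` is the longest element of `W` and `x′_I = Σ_{K⊆I} (−1/2)^{|I|−|K|} x_K`. -/
theorem longestElement_mul_descentBasis' {M : CoxeterMatrix B}
    (cs : CoxeterSystem M W) (w₀ : W) (hw₀ : ∀ w : W, cs.length w ≤ cs.length w₀) :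
    ∀ I : Finset B,
      MonoidAlgebra.single w₀ (1 : ℚ) * descentBasis' cs I =
        ((-1 : ℚ)) ^ I.card • descentBasis' cs I := by
  intro I
  rw [cs.descentBasis'_eq_sum, Finset.mul_sum, Finset.smul_sum,
    ← Equiv.sum_comp (Equiv.mulLeft w₀)
      (fun w => (-1 : ℚ) ^ I.card • cs.descentCoeff I w • single w 1)]
  refine Finset.sum_congr rfl fun w _ => ?_
  rw [Equiv.coe_mulLeft, cs.descentCoeff_longest_mul hw₀, mul_smul_comm, single_mul_single,
    one_mul, smul_smul, ← mul_assoc, ← mul_pow, neg_one_mul, neg_neg, one_pow, one_mul]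
end

section
/- Let (W,S) be a finite Coxeter system with longest element w₀ central in W, and let σ₀ denote conjugation by w₀. Then the Loewy length of the descent algebra satisfies LL(W) ≤ ⌈(|S|+1)/2⌉; more precisely, (Ker θ)^{σ₀}·Σ_k(W) ⊆ Σ_{k−2}(W) for all k, where Σ_k(W) is the span of the x_J with |J| ≤ k, hence ((Ker θ)^{σ₀})^r ⊆ Σ_{|S|−2r}(W) and (Rad Σ(W)^{σ₀})^{⌈(|S|+1)/2⌉} = 0. -/
open MonoidAlgebra

variable {B W : Type*} [DecidableEq B] [Fintype B] [Group W] [Fintype W] [DecidableEq W]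

/-- `Σ_k(W)`: the span of the `x_J` with `|J| ≤ k` (for `k < 0` this is `0`). -/
noncomputable def descentFiltration {M : CoxeterMatrix B} (cs : CoxeterSystem M W)
    (k : ℤ) : Submodule ℚ (MonoidAlgebra ℚ W) :=
  Submodule.span ℚ (descentBasis cs '' {J : Finset B | (J.card : ℤ) ≤ k})

/-!
Write `e` for `w₀` viewed in `ℚW`. Because `w₀` is central and of maximal length,
`ℓ(w₀ v) = ℓ(w₀) - ℓ(v)`, so left multiplication by `w₀` swaps ascents and descents, and
inclusion–exclusion gives `e x_K = ∑_{L ⊆ K} (-1)^|L| x_L`: thus `e` acts on `Σ_k / Σ_{k-1}` by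
`(-1)^k`. An `x ∈ Ker θ` lowers the filtration by one, since `x x_J ∈ span {x_K : K ⊊ J}`. If `x`
also commutes with `e`, then for `y ∈ Σ_k` the element `x y ∈ Σ_{k-1}` is, modulo `Σ_{k-2}`,
an eigenvector of `e` for both `(-1)^(k-1)` and `(-1)^k`, hence lies in `Σ_{k-2}`. Starting from
`1 = x_S ∈ Σ_{|S|}`, a product of `r` such elements lies in `Σ_{|S| - 2r}`, which is `0` once
`2r > |S|`.

The length formula rests on the exchange condition, which comes from Bourbaki's action of `W` on
`W × {±1}` by `s_i · (t, ε) = (s_i t s_i, ±ε)`, with the sign flipped exactly when `t = s_i`: it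
shows that the parity of the number of occurrences of a reflection in the inversion sequence of a
word depends only on the element the word represents.
-/

namespace CoxeterSystem

section Exchange

variable {B W : Type*} [Group W] {M : CoxeterMatrix B} (cs : CoxeterSystem M W)

local prefix:100 "s" => cs.simple
local prefix:100 "π" => cs.wordProd
local prefix:100 "ℓ" => cs.length
local prefix:100 "ris" => cs.rightInvSeq

theorem alternatingWord_two_mul_succ (i j : B) (p : ℕ) :
    alternatingWord i j (2 * (p + 1)) = i :: j :: alternatingWord i j (2 * p) := by
  rw [show 2 * (p + 1) = 2 * p + 1 + 1 by ring, alternatingWord_succ', alternatingWord_succ']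
  simp

theorem reverse_alternatingWord_two_mul (i j : B) (p : ℕ) :
    (alternatingWord i j (2 * p)).reverse = alternatingWord j i (2 * p) := by
  induction p with
  | zero => rfl
  | succ p ih =>
    rw [alternatingWord_two_mul_succ, List.reverse_cons, List.reverse_cons, ih,
      show 2 * (p + 1) = 2 * p + 1 + 1 by ring, alternatingWord_succ, alternatingWord_succ]
    simp

theorem prod_map_alternatingWord_two_mul {G : Type*} [Monoid G] (f : B → G) (i j : B) (p : ℕ) :
    ((alternatingWord i j (2 * p)).map f).prod = (f i * f j) ^ p := by
  induction p with
  | zero => simp [alternatingWord]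
  | succ p ih => simp [alternatingWord_two_mul_succ, ih, pow_succ', mul_assoc]

theorem leftInvSeq_alternatingWord_two_mul (i j : B) (p : ℕ) :
    cs.leftInvSeq (alternatingWord i j (2 * p)) =
      (List.range (2 * p)).map fun k ↦ π alternatingWord j i (2 * k + 1) :=
  List.ext_getElem (by simp) fun k _ hk ↦ by
    simpa using cs.getElem_leftInvSeq_alternatingWord i j p k (by simpa using hk)

section SignedConj

variable [DecidableEq W]

theorem even_count_rightInvSeq_braid (i j : B) (t : W) :
    Even ((ris alternatingWord i j (2 * M i j)).count t) := by
  have hperiodic : ∀ k, π alternatingWord i j (2 * (M i j + k) + 1) =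
      π alternatingWord i j (2 * k + 1) := fun k ↦ by
    simp [prod_alternatingWord_eq_mul_pow, show (2 * (M i j + k) + 1) / 2 = M i j + k by omega,
      show (2 * k + 1) / 2 = k by omega, pow_add]
  -- the inversion sequence of the braid word of length `2 * M i j` is one list repeated twice
  rw [← List.count_reverse, ← leftInvSeq_reverse, reverse_alternatingWord_two_mul,
    leftInvSeq_alternatingWord_two_mul, two_mul, List.range_add, List.map_append, List.map_map,
    List.count_append]
  simp only [Function.comp_def, hperiodic]
  exact ⟨_, rfl⟩

def signedConj (i : B) : Equiv.Perm (W × ℤˣ) :=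
  Function.Involutive.toPerm (fun p ↦ (s i * p.1 * s i, if p.1 = s i then -p.2 else p.2)) <| by
    rintro ⟨t, ε⟩
    have hconj : s i * (s i * t * s i) * s i = t := by simp [mul_assoc]
    have hfix : s i * t * s i = s i ↔ t = s i := by
      rw [mul_eq_right, mul_eq_one_iff_inv_eq, inv_simple, eq_comm]
    by_cases ht : t = s i <;> simp [ht, hconj, hfix]

theorem signedConj_apply (i : B) (p : W × ℤˣ) :
    cs.signedConj i p = (s i * p.1 * s i, if p.1 = s i then -p.2 else p.2) :=
  rfl

theorem prod_map_signedConj_apply (ω : List B) (t : W) (ε : ℤˣ) :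
    (ω.map cs.signedConj).prod (t, ε) =
      (π ω * t * (π ω)⁻¹, (-1) ^ (ris ω).count t * ε) := by
  induction ω with
  | nil => simp
  | cons i ω ih =>
    have hflip : π ω * t * (π ω)⁻¹ = s i ↔ (π ω)⁻¹ * s i * π ω = t := by
      constructor <;> intro h <;> rw [← h] <;> group
    simp only [List.map_cons, List.prod_cons, Equiv.Perm.mul_apply, ih, signedConj_apply,
      rightInvSeq, List.count_cons, hflip, beq_iff_eq]
    refine Prod.ext (by simp [wordProd_cons, mul_assoc]) ?_
    by_cases ht : (π ω)⁻¹ * s i * π ω = t <;> simp [ht, pow_succ]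

theorem isLiftable_signedConj : M.IsLiftable cs.signedConj := by
  intro i j
  ext ⟨t, ε⟩ : 1
  rw [← prod_map_alternatingWord_two_mul, prod_map_signedConj_apply,
    (cs.even_count_rightInvSeq_braid i j t).neg_one_pow]
  simp [prod_alternatingWord_eq_mul_pow]

theorem neg_one_pow_count_rightInvSeq_congr {ω ω' : List B} (h : π ω = π ω') (t : W) :
    ((-1 : ℤˣ)) ^ (ris ω).count t = (-1) ^ (ris ω').count t := by
  have hlift : ∀ ω : List B, cs.lift ⟨_, cs.isLiftable_signedConj⟩ (π ω) =
      (ω.map cs.signedConj).prod := fun ω ↦ by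
    rw [wordProd, map_list_prod, List.map_map]
    simp [Function.comp_def]
  have hperm : (ω.map cs.signedConj).prod = (ω'.map cs.signedConj).prod := by
    rw [← hlift, ← hlift, h]
  simpa [prod_map_signedConj_apply] using congrArg (fun σ ↦ (σ (t, 1)).2) hperm

end SignedConj

theorem exists_eraseIdx_of_isRightDescent {ω : List B} {i : B}
    (h : cs.IsRightDescent (π ω) i) : ∃ j < ω.length, π ω * s i = π (ω.eraseIdx j) := by
  classical
  obtain ⟨ω', hω', hπ'⟩ := cs.exists_isReduced (π ω * s i)
  have hπ : π (ω'.concat i) = π ω := by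
    rw [wordProd_concat, ← hπ', simple_mul_simple_cancel_right]
  have hred : cs.IsReduced (ω'.concat i) := by
    have := cs.length_mul_simple (π ω) i
    rw [IsRightDescent] at h
    rw [IsReduced, hπ, List.length_concat, ← hω', ← hπ']
    omega
  have hcount : (ris (ω'.concat i)).count (s i) = 1 :=
    List.count_eq_one_of_mem hred.nodup_rightInvSeq <| by
      rw [rightInvSeq_concat, List.concat_eq_append]
      exact List.mem_append_right _ (List.mem_singleton_self _)
  -- `s i` occurs once in the inversion sequence of `ω'.concat i`, hence an odd number of times
  -- in that of `ω`
  have hmem : s i ∈ ris ω := by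
    have hsign := cs.neg_one_pow_count_rightInvSeq_congr hπ (s i)
    rw [hcount, pow_one] at hsign
    refine List.count_pos_iff.mp (Nat.pos_of_ne_zero fun h0 ↦ ?_)
    rw [h0, pow_zero] at hsign
    exact absurd hsign (by decide)
  obtain ⟨j, hj, hjs⟩ := List.getElem_of_mem hmem
  refine ⟨j, by simpa using hj, ?_⟩
  rw [← cs.wordProd_mul_getD_rightInvSeq, List.getD_eq_getElem _ _ hj, hjs]

theorem isRightDescent_or_length_mul_conj_lt {a b : W} {i : B}
    (h : cs.IsRightDescent (a * b) i) :
    cs.IsRightDescent b i ∨ ℓ (a * (b * s i * b⁻¹)) < ℓ a := by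
  obtain ⟨α, hα, rfl⟩ := cs.exists_isReduced a
  obtain ⟨β, hβ, rfl⟩ := cs.exists_isReduced b
  unfold IsReduced at hα hβ
  rw [← wordProd_append] at h
  obtain ⟨j, hj, hjeq⟩ := cs.exists_eraseIdx_of_isRightDescent h
  rw [wordProd_append] at hjeq
  by_cases hjα : j < α.length
  · right
    have := cs.length_wordProd_le (α.eraseIdx j)
    rw [List.length_eraseIdx_of_lt hjα] at this
    rw [List.eraseIdx_append_of_lt_length hjα, wordProd_append] at hjeq
    rw [← mul_assoc, ← mul_assoc, hjeq, mul_inv_cancel_right]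
    omega
  · left
    have hjβ : j - α.length < β.length := by rw [List.length_append] at hj; omega
    have := cs.length_wordProd_le (β.eraseIdx (j - α.length))
    rw [List.length_eraseIdx_of_lt hjβ] at this
    rw [List.eraseIdx_append_of_length_le (not_lt.mp hjα), wordProd_append, mul_assoc] at hjeq
    rw [IsRightDescent, mul_left_cancel hjeq]
    omega

end Exchange

section Longest

variable {B W : Type*} [Group W] {M : CoxeterMatrix B} (cs : CoxeterSystem M W)
variable {w₀ : W} (hmax : ∀ w : W, cs.length w ≤ cs.length w₀) (hcent : ∀ w : W, w₀ * w = w * w₀)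
include hmax hcent

local prefix:100 "s" => cs.simple
local prefix:100 "ℓ" => cs.length

theorem length_mul_add_length_of_central_longest (v : W) : ℓ (w₀ * v) + ℓ v = ℓ w₀ := by
  obtain ⟨n, hn⟩ : ∃ n, ℓ v = n := ⟨_, rfl⟩
  induction n generalizing v with
  | zero => simp [cs.length_eq_zero_iff.mp hn]
  | succ n ih =>
    obtain ⟨i, hi⟩ := cs.exists_rightDescent_of_ne_one (w := v) (by rintro rfl; simp at hn)
    rw [isRightDescent_iff] at hi
    set u := v * s i
    have hv : u * s i = v := cs.simple_mul_simple_cancel_right i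
    have hu : ℓ u = n := by omega
    have ih' := ih u hu
    have hprod : u⁻¹ * (w₀ * u) = w₀ := by rw [hcent, inv_mul_cancel_left]
    have hdesc : cs.IsRightDescent (u⁻¹ * (w₀ * u)) i := by
      rw [hprod, IsRightDescent]
      have := hmax (w₀ * s i)
      have := cs.length_mul_simple w₀ i
      omega
    rcases cs.isRightDescent_or_length_mul_conj_lt hdesc with hdown | habsorb
    · rw [isRightDescent_iff, mul_assoc, hv] at hdown
      omega
    · have hconj : w₀ * s i * w₀⁻¹ = s i := by rw [hcent, mul_inv_cancel_right]
      have : u⁻¹ * (w₀ * u * s i * (w₀ * u)⁻¹) = v⁻¹ := calc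
        _ = w₀ * s i * w₀⁻¹ * u⁻¹ := by rw [hcent u]; group
        _ = v⁻¹ := by simp [hconj, u]
      rw [this, length_inv, length_inv] at habsorb
      omega

theorem mul_self_of_central_longest : w₀ * w₀ = 1 := by
  have := cs.length_mul_add_length_of_central_longest hmax hcent w₀
  exact cs.length_eq_zero_iff.mp (by omega)

theorem length_mul_lt_length_mul_mul_simple_iff_of_central_longest (v : W) (i : B) :
    ℓ (w₀ * v) < ℓ (w₀ * v * s i) ↔ ℓ (v * s i) < ℓ v := by
  have := cs.length_mul_add_length_of_central_longest hmax hcent v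
  have := cs.length_mul_add_length_of_central_longest hmax hcent (v * s i)
  have := cs.length_mul_simple v i
  rw [← mul_assoc] at *
  omega

end Longest

end CoxeterSystem

theorem Finset.sum_powerset_ite_neg_one_pow {α R : Type*} [DecidableEq α] [Ring R]
    (K : Finset α) (p : α → Prop) [DecidablePred p] :
    ∑ L ∈ K.powerset, (if ∀ i ∈ L, p i then (-1 : R) ^ L.card else 0) =
      if ∀ i ∈ K, ¬p i then 1 else 0 := by
  have hfilter : K.powerset.filter (fun L ↦ ∀ i ∈ L, p i) = (K.filter p).powerset := by
    ext L
    simp only [Finset.mem_filter, Finset.mem_powerset, Finset.subset_iff]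
    grind
  rw [← Finset.sum_filter, hfilter]
  have h := congrArg (Int.cast : ℤ → R) (Finset.sum_powerset_neg_one_pow_card (x := K.filter p))
  push_cast [Finset.filter_eq_empty_iff] at h
  exact h

section DescentAlgebra

variable {B W : Type*} [DecidableEq B] [Fintype B] [Group W] [Fintype W]
  {M : CoxeterMatrix B} (cs : CoxeterSystem M W)

local prefix:100 "s" => cs.simple
local prefix:100 "ℓ" => cs.length

theorem descentFiltration_mono {k k' : ℤ} (h : k ≤ k') :
    descentFiltration cs k ≤ descentFiltration cs k' :=
  Submodule.span_mono (Set.image_mono fun _ hJ ↦ le_trans hJ h)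

theorem descentBasis_mem_descentFiltration {J : Finset B} {k : ℤ} (h : (J.card : ℤ) ≤ k) :
    descentBasis cs J ∈ descentFiltration cs k :=
  Submodule.subset_span ⟨J, h, rfl⟩

theorem descentFiltration_eq_bot {k : ℤ} (hk : k < 0) : descentFiltration cs k = ⊥ := by
  rw [descentFiltration, Submodule.span_eq_bot]
  rintro _ ⟨J, hJ, rfl⟩
  have : (J.card : ℤ) ≤ k := hJ
  omega

theorem map_descentFiltration_le {f : MonoidAlgebra ℚ W →ₗ[ℚ] MonoidAlgebra ℚ W} {k : ℤ}
    {N : Submodule ℚ (MonoidAlgebra ℚ W)}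
    (h : ∀ J : Finset B, (J.card : ℤ) ≤ k → f (descentBasis cs J) ∈ N) :
    (descentFiltration cs k).map f ≤ N := by
  rw [descentFiltration, Submodule.map_span_le]
  rintro _ ⟨J, hJ, rfl⟩
  exact h J hJ

theorem descentBasis_univ : descentBasis cs Finset.univ = 1 := by
  rw [descentBasis, Fintype.sum_eq_single 1, if_pos, one_def]
  · simp
  · intro w hw
    obtain ⟨i, hi⟩ := cs.exists_rightDescent_of_ne_one hw
    rw [if_neg fun h ↦ lt_asymm hi (h i (Finset.mem_univ i))]

theorem single_mul_descentBasis {w₀ : W} (hmax : ∀ w : W, ℓ w ≤ ℓ w₀)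
    (hcent : ∀ w : W, w₀ * w = w * w₀) (K : Finset B) :
    single w₀ (1 : ℚ) * descentBasis cs K =
      ∑ L ∈ K.powerset, (-1 : ℚ) ^ L.card • descentBasis cs L := by
  simp only [descentBasis, Finset.mul_sum, mul_ite, single_mul_single, mul_one, mul_zero,
    Finset.smul_sum]
  -- reindex by `w = w₀ * v`; left multiplication by `w₀` swaps ascents and descents
  rw [← Equiv.sum_comp (Equiv.mulLeft w₀), Finset.sum_comm]
  refine Finset.sum_congr rfl fun v _ ↦ ?_
  simp only [Equiv.coe_mulLeft, ← mul_assoc, cs.mul_self_of_central_longest hmax hcent, one_mul,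
    cs.length_mul_lt_length_mul_mul_simple_iff_of_central_longest hmax hcent, smul_ite, smul_zero]
  have hdesc : ∀ i, ¬ℓ v < ℓ (v * s i) ↔ ℓ (v * s i) < ℓ v := fun i ↦ by
    have := cs.length_mul_simple v i
    omega
  calc _ = (if ∀ i ∈ K, ¬ℓ v < ℓ (v * s i) then (1 : ℚ) else 0) • single v (1 : ℚ) := by
        simp only [hdesc, ite_smul, one_smul, zero_smul]
    _ = (∑ L ∈ K.powerset, if ∀ i ∈ L, ℓ v < ℓ (v * s i) then (-1 : ℚ) ^ L.card else 0) •
          single v (1 : ℚ) := by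
        convert congrArg (· • single v (1 : ℚ))
          (Finset.sum_powerset_ite_neg_one_pow K fun i ↦ ℓ v < ℓ (v * s i)).symm
    _ = _ := by simp only [Finset.sum_smul, ite_smul, zero_smul]

theorem single_mul_descentBasis_sub_mem {w₀ : W} (hmax : ∀ w : W, ℓ w ≤ ℓ w₀)
    (hcent : ∀ w : W, w₀ * w = w * w₀) (J : Finset B) :
    single w₀ (1 : ℚ) * descentBasis cs J - (-1 : ℚ) ^ J.card • descentBasis cs J ∈
      descentFiltration cs (J.card - 1) := by
  rw [single_mul_descentBasis cs hmax hcent,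
    ← Finset.sum_erase_add _ _ (Finset.mem_powerset_self J), add_sub_cancel_right]
  refine Submodule.sum_mem _ fun L hL ↦ Submodule.smul_mem _ _ ?_
  rw [Finset.mem_erase, Finset.mem_powerset] at hL
  have := Finset.card_lt_card (Finset.ssubset_iff_subset_ne.mpr ⟨hL.2, hL.1⟩)
  exact descentBasis_mem_descentFiltration cs (by omega)

theorem single_mul_sub_zpow_smul_mem {w₀ : W} (hmax : ∀ w : W, ℓ w ≤ ℓ w₀)
    (hcent : ∀ w : W, w₀ * w = w * w₀) {k : ℤ} {y : MonoidAlgebra ℚ W}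
    (hy : y ∈ descentFiltration cs k) :
    single w₀ (1 : ℚ) * y - (-1 : ℚ) ^ k • y ∈ descentFiltration cs (k - 1) := by
  let f := LinearMap.mulLeft ℚ (single w₀ (1 : ℚ)) - (-1 : ℚ) ^ k • LinearMap.id
  refine map_descentFiltration_le cs (f := f) (fun J hJ ↦ ?_) (Submodule.mem_map_of_mem hy)
  have hJ' := single_mul_descentBasis_sub_mem cs hmax hcent J
  simp only [f, LinearMap.sub_apply, LinearMap.mulLeft_apply, LinearMap.smul_apply,
    LinearMap.id_apply]
  rcases hJ.lt_or_eq with hlt | rfl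
  · have hsplit : single w₀ (1 : ℚ) * descentBasis cs J - (-1 : ℚ) ^ k • descentBasis cs J =
        (single w₀ (1 : ℚ) * descentBasis cs J - (-1 : ℚ) ^ J.card • descentBasis cs J) +
          ((-1 : ℚ) ^ J.card - (-1 : ℚ) ^ k) • descentBasis cs J := by
      module
    rw [hsplit]
    exact add_mem (descentFiltration_mono cs (by omega) hJ')
      (Submodule.smul_mem _ _ (descentBasis_mem_descentFiltration cs (by omega)))
  · rwa [zpow_natCast]

theorem mul_mem_descentFiltration_sub_one {x : MonoidAlgebra ℚ W}
    (hx : ∀ J, x * descentBasis cs J ∈ Submodule.span ℚ (descentBasis cs '' {K | K ⊂ J}))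
    {k : ℤ} {y : MonoidAlgebra ℚ W} (hy : y ∈ descentFiltration cs k) :
    x * y ∈ descentFiltration cs (k - 1) := by
  refine map_descentFiltration_le cs (f := LinearMap.mulLeft ℚ x) (fun J hJ ↦ ?_)
    (Submodule.mem_map_of_mem hy)
  refine Submodule.span_le.mpr ?_ (hx J)
  rintro _ ⟨K, hK, rfl⟩
  have := Finset.card_lt_card hK
  exact descentBasis_mem_descentFiltration cs (by omega)

/-- Modulo `Σ_{k-2}`, `e` acts on `x * y ∈ Σ_{k-1}` by `(-1)^(k-1)`, and, commuting past `x`,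
also by `(-1)^k`; hence `2 (-1)^k x y ∈ Σ_{k-2}`. -/
theorem mul_mem_descentFiltration_sub_two {x e : MonoidAlgebra ℚ W}
    (hx : ∀ J, x * descentBasis cs J ∈ Submodule.span ℚ (descentBasis cs '' {K | K ⊂ J}))
    (he : ∀ k : ℤ, ∀ y ∈ descentFiltration cs k,
      e * y - (-1 : ℚ) ^ k • y ∈ descentFiltration cs (k - 1))
    (hxe : e * x = x * e) {k : ℤ} {y : MonoidAlgebra ℚ W} (hy : y ∈ descentFiltration cs k) :
    x * y ∈ descentFiltration cs (k - 2) := by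
  have hxy := mul_mem_descentFiltration_sub_one cs hx hy
  have h₁ := he (k - 1) _ hxy
  have h₂ := mul_mem_descentFiltration_sub_one cs hx (he k y hy)
  rw [sub_sub, one_add_one_eq_two] at h₁ h₂
  have hsign : (-1 : ℚ) ^ (k - 1) = -(-1) ^ k := by
    rw [zpow_sub_one₀ (by norm_num)]; norm_num
  have hcomb : (2 * (-1 : ℚ) ^ k) • (x * y) =
      (e * (x * y) - (-1 : ℚ) ^ (k - 1) • (x * y)) - x * (e * y - (-1 : ℚ) ^ k • y) := by
    rw [hsign, ← mul_assoc, hxe, mul_assoc, mul_sub, mul_smul_comm]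
    module
  have hmem := sub_mem h₁ h₂
  rw [← hcomb] at hmem
  exact (Submodule.smul_mem_iff _ (by simp [zpow_ne_zero])).mp hmem

theorem list_prod_mem_descentFiltration {l : List (MonoidAlgebra ℚ W)}
    (hl : ∀ x ∈ l, ∀ k : ℤ, ∀ y ∈ descentFiltration cs k, x * y ∈ descentFiltration cs (k - 2)) :
    l.prod ∈ descentFiltration cs (Fintype.card B - 2 * l.length) := by
  induction l with
  | nil =>
    rw [List.prod_nil, ← descentBasis_univ cs]
    exact descentBasis_mem_descentFiltration cs (by simp)
  | cons x l ih =>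
    have := hl x List.mem_cons_self _ _ (ih fun z hz ↦ hl z (List.mem_cons_of_mem x hz))
    rw [List.prod_cons, List.length_cons]
    convert this using 2
    push_cast
    ring

end DescentAlgebra

theorem loewy_length_bound_central_general {M : CoxeterMatrix B}
    (cs : CoxeterSystem M W) (A : Subalgebra ℚ (MonoidAlgebra ℚ W))
    (w₀ : W)
    (hw₀ : ∀ w : W, cs.length w ≤ cs.length w₀) (hcent : ∀ w : W, w₀ * w = w * w₀)
    (t : Finset B → MonoidAlgebra ℚ W → ℚ)
    (ht : ∀ (J : Finset B), ∀ x ∈ A,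
      x * descentBasis cs J - (t J x) • descentBasis cs J ∈
        Submodule.span ℚ (descentBasis cs '' {K | K ⊂ J})) :
    (∀ k : ℤ, ∀ x : MonoidAlgebra ℚ W,
      (x ∈ A ∧ (∀ J, t J x = 0) ∧
        MonoidAlgebra.single w₀ (1 : ℚ) * x = x * MonoidAlgebra.single w₀ (1 : ℚ)) →
      ∀ y ∈ descentFiltration cs k, x * y ∈ descentFiltration cs (k - 2)) ∧
    (∀ r : ℕ, ∀ xs : Fin r → MonoidAlgebra ℚ W,
      (∀ i, xs i ∈ A ∧ (∀ J, t J (xs i) = 0) ∧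
        MonoidAlgebra.single w₀ (1 : ℚ) * xs i =
          xs i * MonoidAlgebra.single w₀ (1 : ℚ)) →
      (List.ofFn xs).prod ∈
        descentFiltration cs ((Fintype.card B : ℤ) - 2 * r)) ∧
    (∀ xs : Fin ((Fintype.card B + 2) / 2) → MonoidAlgebra ℚ W,
      (∀ i, xs i ∈ A ∧ (∀ J, t J (xs i) = 0) ∧
        MonoidAlgebra.single w₀ (1 : ℚ) * xs i =
          xs i * MonoidAlgebra.single w₀ (1 : ℚ)) →
      (List.ofFn xs).prod = 0) := by
  have hlower : ∀ k : ℤ, ∀ x, x ∈ A ∧ (∀ J, t J x = 0) ∧ single w₀ (1 : ℚ) * x = x * single w₀ 1 →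
      ∀ y ∈ descentFiltration cs k, x * y ∈ descentFiltration cs (k - 2) := by
    rintro k x ⟨hxA, hxt, hxw₀⟩ y hy
    refine mul_mem_descentFiltration_sub_two cs (fun J ↦ ?_)
      (fun _ _ ↦ single_mul_sub_zpow_smul_mem cs hw₀ hcent) hxw₀ hy
    simpa [hxt J] using ht J x hxA
  have hprod : ∀ r : ℕ, ∀ xs : Fin r → MonoidAlgebra ℚ W,
      (∀ i, xs i ∈ A ∧ (∀ J, t J (xs i) = 0) ∧ single w₀ (1 : ℚ) * xs i = xs i * single w₀ 1) →
      (List.ofFn xs).prod ∈ descentFiltration cs ((Fintype.card B : ℤ) - 2 * r) := fun r xs hxs ↦ by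
    simpa using list_prod_mem_descentFiltration cs
      (List.forall_mem_ofFn_iff.mpr fun i k ↦ hlower k _ (hxs i))
  refine ⟨hlower, hprod, fun xs hxs ↦ ?_⟩
  have := hprod _ xs hxs
  rwa [descentFiltration_eq_bot cs (by omega), Submodule.mem_bot] at this

set_option synthInstance.maxHeartbeats 1000000 in
set_option maxHeartbeats 1000000 in
/-- Suppose the longest element `w₀` of `W` is central. Elements of
`(Ker θ)^{σ₀} = Rad(Σ(W)^{σ₀})` — i.e. elements `x` of `Σ(W)` commuting with `w₀` and
killed by all the irreducible characters `τ_{λ(J)}` (characterized by the eigenvalue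
property `x·x_J ≡ τ_{λ(J)}(x)·x_J` mod span{x_K : K ⊊ J}) — satisfy
`x·Σ_k(W) ⊆ Σ_{k−2}(W)` for all `k`; hence any product of `r` such elements lies in
`Σ_{|S|−2r}(W)`, and any product of `⌈(|S|+1)/2⌉` of them vanishes, so the Loewy
length of `Σ(W)^{σ₀}` (here all of `Σ(W)`) is at most `⌈(|S|+1)/2⌉`. -/
theorem loewy_length_bound_central {M : CoxeterMatrix B}
    (cs : CoxeterSystem M W) (A : Subalgebra ℚ (MonoidAlgebra ℚ W))
    (hA : IsDescentAlgebra cs A) (w₀ : W)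
    (hw₀ : ∀ w : W, cs.length w ≤ cs.length w₀) (hcent : ∀ w : W, w₀ * w = w * w₀)
    (t : Finset B → MonoidAlgebra ℚ W → ℚ)
    (ht : ∀ (J : Finset B), ∀ x ∈ A,
      x * descentBasis cs J - (t J x) • descentBasis cs J ∈
        Submodule.span ℚ (descentBasis cs '' {K | K ⊂ J})) :
    (∀ k : ℤ, ∀ x : MonoidAlgebra ℚ W,
      (x ∈ A ∧ (∀ J, t J x = 0) ∧
        MonoidAlgebra.single w₀ (1 : ℚ) * x = x * MonoidAlgebra.single w₀ (1 : ℚ)) →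
      ∀ y ∈ descentFiltration cs k, x * y ∈ descentFiltration cs (k - 2)) ∧
    (∀ r : ℕ, ∀ xs : Fin r → MonoidAlgebra ℚ W,
      (∀ i, xs i ∈ A ∧ (∀ J, t J (xs i) = 0) ∧
        MonoidAlgebra.single w₀ (1 : ℚ) * xs i =
          xs i * MonoidAlgebra.single w₀ (1 : ℚ)) →
      (List.ofFn xs).prod ∈
        descentFiltration cs ((Fintype.card B : ℤ) - 2 * r)) ∧
    (∀ xs : Fin ((Fintype.card B + 2) / 2) → MonoidAlgebra ℚ W,
      (∀ i, xs i ∈ A ∧ (∀ J, t J (xs i) = 0) ∧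
        MonoidAlgebra.single w₀ (1 : ℚ) * xs i =
          xs i * MonoidAlgebra.single w₀ (1 : ℚ)) →
      (List.ofFn xs).prod = 0) :=
  loewy_length_bound_central_general cs A w₀ hw₀ hcent t ht
end
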